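/- If the language L has at most countably many sentences, then for any family 𝒯 of complete L-theories the following conditions are equivalent: (1) |Cl_E(𝒯)| = 2^ℵ₀; (2) e-Sp(𝒯) = 2^ℵ₀; (3) RS(𝒯) = ∞. -/

import Mathlib

open FirstOrder Language Cardinal Set

universe u v w

variable {L : FirstOrder.Language.{u, v}}

/-- A complete theory: a satisfiable set of sentences containing each sentence or its
negation (`Theory.IsMaximal` in Mathlib). -/
abbrev CTheory (L : FirstOrder.Language.{u, v}) : Type max u v :=
  {T : L.Theory // T.IsMaximal}

/-- The neighbourhood `𝒯_φ = {T ∈ 𝒯 | φ ∈ T}`. -/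
def nbhd (𝒯 : Set (CTheory L)) (φ : L.Sentence) : Set (CTheory L) :=
  {T | T ∈ 𝒯 ∧ φ ∈ T.1}

/-- `T` is an accumulation point of `𝒯` if for every sentence `φ ∈ T` the set `𝒯_φ` is
infinite. -/
def IsAccPoint (𝒯 : Set (CTheory L)) (T : CTheory L) : Prop :=
  ∀ φ : L.Sentence, φ ∈ T.1 → (nbhd 𝒯 φ).Infinite

/-- The `E`-closure of `𝒯`: `𝒯` together with all its accumulation points. -/
def ClE (𝒯 : Set (CTheory L)) : Set (CTheory L) :=
  𝒯 ∪ {T | IsAccPoint 𝒯 T}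

/-- The `e`-spectrum of `𝒯`: the cardinality of the set of accumulation points of `𝒯`. -/
noncomputable def eSp (𝒯 : Set (CTheory L)) : Cardinal :=
  Cardinal.mk {T : CTheory L // IsAccPoint 𝒯 T}

/-- Two sentences are inconsistent if `{φ, ψ}` is unsatisfiable. -/
def Inconsistent (φ ψ : L.Sentence) : Prop :=
  ¬ FirstOrder.Language.Theory.IsSatisfiable ({φ, ψ} : L.Theory)

open Classical in
/-- `RSge α 𝒯` says `RS(𝒯) ≥ α`: `RS(𝒯) ≥ 0` iff `𝒯 ≠ ∅`; `RS(𝒯) ≥ 1` iff `𝒯` is infinite;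
for `β ≥ 1`, `RS(𝒯) ≥ β + 1` iff there are pairwise inconsistent sentences `φ_n`, `n ∈ ℕ`,
with `RS(𝒯_{φ_n}) ≥ β` for all `n`; for limit `λ`, `RS(𝒯) ≥ λ` iff `RS(𝒯) ≥ β` for all
`β < λ`. -/
noncomputable def RSge (α : Ordinal.{w}) : Set (CTheory L) → Prop :=
  @Ordinal.limitRecOn (fun _ => Set (CTheory L) → Prop) α
    (fun 𝒯 => 𝒯.Nonempty)
    (fun β ih 𝒯 =>
      if β = 0 then 𝒯.Infinite
      else ∃ φ : ℕ → L.Sentence,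
        (∀ m n : ℕ, m ≠ n → Inconsistent (φ m) (φ n)) ∧ ∀ k : ℕ, ih (nbhd 𝒯 (φ k)))
    (fun β _ ih 𝒯 => ∀ γ : Ordinal, ∀ h : γ < β, ih γ h 𝒯)

/-- `RS(𝒯) = α` for an ordinal `α`: `RS(𝒯) ≥ α` but not `RS(𝒯) ≥ α + 1`. -/
def RSeq (𝒯 : Set (CTheory L)) (α : Ordinal.{w}) : Prop :=
  RSge α 𝒯 ∧ ¬ RSge (α + 1) 𝒯

/-- `RS(𝒯) = ∞`: `RS(𝒯) ≥ α` for every ordinal `α`. -/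
def RSinf (𝒯 : Set (CTheory L)) : Prop :=
  ∀ α : Ordinal.{w}, RSge α 𝒯

/-- `ds(𝒯) = n` (relative to `RS(𝒯) = α`): `n` is the largest natural number for which
there exist `n` pairwise inconsistent sentences `φ_1, …, φ_n` with `RS(𝒯_{φ_i}) = α`. -/
def dsEq (𝒯 : Set (CTheory L)) (α : Ordinal.{w}) (n : ℕ) : Prop :=
  IsGreatest {m : ℕ | ∃ φ : Fin m → L.Sentence,
    (∀ i j : Fin m, i ≠ j → Inconsistent (φ i) (φ j)) ∧
    ∀ i : Fin m, RSeq (nbhd 𝒯 (φ i)) α} n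

/-- `𝒯` is `e`-minimal: for every sentence `φ`, `𝒯_φ` is finite or `𝒯_{¬φ}` is finite. -/
def EMinimal (𝒯 : Set (CTheory L)) : Prop :=
  ∀ φ : L.Sentence, (nbhd 𝒯 φ).Finite ∨ (nbhd 𝒯 φ.not).Finite

/-- `𝒯` is `a`-minimal: `𝒯` has infinitely many accumulation points and for every sentence
`φ`, `𝒯_φ` or `𝒯_{¬φ}` has only finitely many accumulation points. -/
def AMinimal (𝒯 : Set (CTheory L)) : Prop :=
  {T : CTheory L | IsAccPoint 𝒯 T}.Infinite ∧
  ∀ φ : L.Sentence,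
    {T : CTheory L | IsAccPoint (nbhd 𝒯 φ) T}.Finite ∨
    {T : CTheory L | IsAccPoint (nbhd 𝒯 φ.not) T}.Finite

/-- `𝒯` is `α`-minimal: `RS(𝒯) = α` and for every sentence `φ`, `RS(𝒯_φ) < α` or
`RS(𝒯_{¬φ}) < α`. -/
def AlphaMinimal (𝒯 : Set (CTheory L)) (α : Ordinal.{w}) : Prop :=
  RSeq 𝒯 α ∧
  ∀ φ : L.Sentence, ¬ RSge α (nbhd 𝒯 φ) ∨ ¬ RSge α (nbhd 𝒯 φ.not)

/-!
Uncountability of `Cl_E(𝒯)` and `RS(𝒯) = ∞` are both properties `P` of sets of complete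
theories that force infiniteness and that split: from `P 𝒯` one gets a sentence `ρ` with
`P 𝒯_ρ` and `P 𝒯_¬ρ`. For `RS = ∞` this is because countably many ordinal bounds have a common
bound; for uncountable closures it is a Cantor–Bendixson condensation argument. Both use that
there are only countably many sentences.

A splitting property implies `RS = ∞`: peeling off the pieces `𝒯_{¬ρ₀ ∧ ⋯ ∧ ¬ρₙ₋₁ ∧ ρₙ}` gives
infinitely many pairwise inconsistent sentences whose neighbourhoods again satisfy `P`. It also
yields a binary tree of neighbourhoods; by compactness each of its `2^ℵ₀` branches determines an
accumulation point, distinct branches giving distinct points. As there are at most `2^ℵ₀`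
complete theories, `(3) → (2) → (1) → (3)`.
-/

namespace CTheory

lemma mem_iff_realize (T : CTheory L) (M : T.1.ModelType) (φ : L.Sentence) :
    φ ∈ T.1 ↔ M ⊨ φ := by
  refine ⟨fun h => Theory.realize_sentence_of_mem T.1 h, fun h => ?_⟩
  refine (T.2.mem_or_not_mem φ).resolve_right fun hn => ?_
  exact (Sentence.realize_not M).1 (Theory.realize_sentence_of_mem T.1 hn) h

lemma not_mem_iff (T : CTheory L) (φ : L.Sentence) : φ.not ∈ T.1 ↔ φ ∉ T.1 := by
  obtain ⟨M⟩ := T.2.1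
  rw [mem_iff_realize T M, mem_iff_realize T M, Sentence.realize_not]

lemma eq_of_subset {T T' : CTheory L} (h : T.1 ⊆ T'.1) : T = T' :=
  Subtype.ext <| h.antisymm fun φ hφ => by_contra fun hφT =>
    (not_mem_iff T' φ).1 (h ((not_mem_iff T φ).2 hφT)) hφ

lemma inf_mem_iff (T : CTheory L) (φ ψ : L.Sentence) :
    φ ⊓ ψ ∈ T.1 ↔ φ ∈ T.1 ∧ ψ ∈ T.1 := by
  obtain ⟨M⟩ := T.2.1
  rw [mem_iff_realize T M, mem_iff_realize T M, mem_iff_realize T M, Sentence.realize_inf]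

lemma top_mem (T : CTheory L) : (⊤ : L.Sentence) ∈ T.1 := by
  obtain ⟨M⟩ := T.2.1
  exact (mem_iff_realize T M ⊤).2 (Sentence.realize_top _)

lemma exists_superset_of_isSatisfiable {Φ : L.Theory} (h : Φ.IsSatisfiable) :
    ∃ T : CTheory L, Φ ⊆ T.1 := by
  obtain ⟨M⟩ := h
  exact ⟨⟨L.completeTheory M, completeTheory.isMaximal L M⟩,
    Theory.model_iff_subset_completeTheory.1 M.is_model⟩

end CTheory

lemma inconsistent_iff {φ ψ : L.Sentence} :
    Inconsistent φ ψ ↔ ∀ T : CTheory L, φ ∈ T.1 → ψ ∈ T.1 → False := by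
  refine ⟨fun h T hφ hψ => h (T.2.1.mono ?_), fun h hsat => ?_⟩
  · simp [Set.insert_subset_iff, hφ, hψ]
  · obtain ⟨T, hT⟩ := CTheory.exists_superset_of_isSatisfiable hsat
    exact h T (hT (by simp)) (hT (by simp))

section nbhd

variable {𝒮 𝒯 : Set (CTheory L)}

lemma nbhd_subset (φ : L.Sentence) : nbhd 𝒯 φ ⊆ 𝒯 := fun _ h => h.1

lemma nbhd_mono (h : 𝒮 ⊆ 𝒯) (φ : L.Sentence) : nbhd 𝒮 φ ⊆ nbhd 𝒯 φ :=
  fun _ hT => ⟨h hT.1, hT.2⟩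

lemma nbhd_top (𝒯 : Set (CTheory L)) : nbhd 𝒯 ⊤ = 𝒯 :=
  Set.ext fun T => ⟨And.left, fun h => ⟨h, T.top_mem⟩⟩

lemma nbhd_inf (𝒯 : Set (CTheory L)) (φ ψ : L.Sentence) :
    nbhd 𝒯 (φ ⊓ ψ) = nbhd (nbhd 𝒯 φ) ψ := by
  ext T
  simp only [nbhd, Set.mem_ofPred_eq, CTheory.inf_mem_iff, and_assoc]

end nbhd

section RSge

variable {𝒯 : Set (CTheory L)}

lemma RSge_zero : RSge (0 : Ordinal.{w}) 𝒯 ↔ 𝒯.Nonempty := by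
  rw [RSge, Ordinal.limitRecOn_zero]

lemma RSge_one : RSge (1 : Ordinal.{w}) 𝒯 ↔ 𝒯.Infinite := by
  rw [RSge, ← zero_add 1, Ordinal.limitRecOn_add_one, if_pos rfl]

lemma RSge_add_one_of_ne_zero {β : Ordinal.{w}} (hβ : β ≠ 0) :
    RSge (β + 1) 𝒯 ↔ ∃ φ : ℕ → L.Sentence,
      (∀ m n : ℕ, m ≠ n → Inconsistent (φ m) (φ n)) ∧ ∀ k, RSge β (nbhd 𝒯 (φ k)) := by
  rw [RSge, Ordinal.limitRecOn_add_one, if_neg hβ]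
  rfl

lemma RSge_of_isSuccLimit {β : Ordinal.{w}} (hβ : Order.IsSuccLimit β) :
    RSge β 𝒯 ↔ ∀ γ < β, RSge γ 𝒯 := by
  rw [RSge, Ordinal.limitRecOn_limit _ _ _ _ hβ]
  rfl

lemma RSge_mono (α : Ordinal.{w}) {𝒮 𝒯 : Set (CTheory L)} (hsub : 𝒮 ⊆ 𝒯) (h : RSge α 𝒮) :
    RSge α 𝒯 := by
  induction α using Ordinal.limitRecOn generalizing 𝒮 𝒯 with
  | zero => exact RSge_zero.2 ((RSge_zero.1 h).mono hsub)
  | add_one β ih =>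
    rcases eq_or_ne β 0 with rfl | hβ
    · rw [zero_add, RSge_one] at h ⊢
      exact h.mono hsub
    · obtain ⟨φ, hφ, hrank⟩ := (RSge_add_one_of_ne_zero hβ).1 h
      exact (RSge_add_one_of_ne_zero hβ).2 ⟨φ, hφ, fun k => ih (nbhd_mono hsub (φ k)) (hrank k)⟩
  | limit β hβ ih =>
    rw [RSge_of_isSuccLimit hβ] at h ⊢
    exact fun γ hγ => ih γ hγ hsub (h γ hγ)

lemma RSge_of_RSge_add_one {β : Ordinal.{w}} (h : RSge (β + 1) 𝒯) : RSge β 𝒯 := by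
  rcases eq_or_ne β 0 with rfl | hβ
  · rw [zero_add, RSge_one] at h
    exact RSge_zero.2 h.nonempty
  · obtain ⟨φ, -, hrank⟩ := (RSge_add_one_of_ne_zero hβ).1 h
    exact RSge_mono β (nbhd_subset (φ 0)) (hrank 0)

lemma RSge_anti {β α : Ordinal.{w}} (hβα : β ≤ α) (h : RSge α 𝒯) : RSge β 𝒯 := by
  induction α using Ordinal.limitRecOn generalizing β with
  | zero => rwa [nonpos_iff_eq_zero.1 hβα]
  | add_one α ih =>
    rcases hβα.eq_or_lt with rfl | hlt
    · exact h
    · exact ih (Order.lt_add_one_iff.1 hlt) (RSge_of_RSge_add_one h)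
  | limit α hα _ =>
    rcases hβα.eq_or_lt with rfl | hlt
    · exact h
    · exact (RSge_of_isSuccLimit hα).1 h β hlt

lemma RSinf.infinite (h : RSinf.{_, _, w} 𝒯) : 𝒯.Infinite :=
  RSge_one.1 (h 1)

end RSge

/-- Compactness: the theories of `𝒯` eventually satisfy `Φ ∪ D`, where `D` collects the sentences
that hold in all but finitely many members of `𝒯`; any completion of it is an accumulation point. -/
lemma exists_isAccPoint_superset {𝒯 : Set (CTheory L)} {Φ : L.Theory}
    (h : ∀ Φ₀ : Finset L.Sentence, ↑Φ₀ ⊆ Φ → {T | T ∈ 𝒯 ∧ ↑Φ₀ ⊆ T.1}.Infinite) :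
    ∃ T : CTheory L, IsAccPoint 𝒯 T ∧ Φ ⊆ T.1 := by
  classical
  set D : L.Theory := {ψ | {T | T ∈ 𝒯 ∧ ψ ∉ T.1}.Finite}
  have hsat : (Φ ∪ D).IsSatisfiable := by
    rw [Theory.isSatisfiable_iff_isFinitelySatisfiable]
    intro Δ hΔ
    have hbad : (⋃ ψ ∈ Δ.filter (· ∈ D), {T | T ∈ 𝒯 ∧ ψ ∉ T.1}).Finite :=
      (Δ.filter (· ∈ D)).finite_toSet.biUnion fun ψ hψ => (Finset.mem_filter.1 hψ).2
    obtain ⟨T, ⟨hT𝒯, hTΦ⟩, hTbad⟩ :=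
      ((h (Δ.filter (· ∈ Φ)) (fun ψ hψ => (Finset.mem_filter.1 hψ).2)).sdiff hbad).nonempty
    refine T.2.1.mono fun ψ hψ => ?_
    by_cases hψΦ : ψ ∈ Φ
    · exact hTΦ (Finset.mem_filter.2 ⟨hψ, hψΦ⟩)
    · by_contra hψT
      refine hTbad (Set.mem_biUnion (Finset.mem_filter.2 ⟨hψ, ?_⟩) ⟨hT𝒯, hψT⟩)
      exact (hΔ hψ).resolve_left hψΦ
  obtain ⟨T, hT⟩ := CTheory.exists_superset_of_isSatisfiable hsat
  refine ⟨T, fun φ hφ => ?_, Set.subset_union_left.trans hT⟩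
  by_contra hfin
  have hnotD : φ.not ∈ D := by
    simp only [D, Set.mem_ofPred_eq, CTheory.not_mem_iff, not_not]
    exact Set.not_infinite.1 hfin
  exact (CTheory.not_mem_iff T φ).1 (hT (Or.inr hnotD)) hφ

section Splitting

def IsSplitting (P : Set (CTheory L) → Prop) (sp : Set (CTheory L) → L.Sentence) : Prop :=
  ∀ 𝒮, P 𝒮 → P (nbhd 𝒮 (sp 𝒮)) ∧ P (nbhd 𝒮 (sp 𝒮).not)

variable {P : Set (CTheory L) → Prop} {sp : Set (CTheory L) → L.Sentence} {𝒯 : Set (CTheory L)}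

/-- `⊤ ⊓ ¬ρ₀ ⊓ ⋯ ⊓ ¬ρₙ₋₁`, where `ρₖ` splits what is left of `𝒯` once the first `k` pieces
`pieceSentence sp 𝒯 i`, `i < k`, are removed. -/
def restSentence (sp : Set (CTheory L) → L.Sentence) (𝒯 : Set (CTheory L)) : ℕ → L.Sentence
  | 0 => ⊤
  | n + 1 => restSentence sp 𝒯 n ⊓ (sp (nbhd 𝒯 (restSentence sp 𝒯 n))).not

def pieceSentence (sp : Set (CTheory L) → L.Sentence) (𝒯 : Set (CTheory L)) (n : ℕ) :
    L.Sentence :=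
  restSentence sp 𝒯 n ⊓ sp (nbhd 𝒯 (restSentence sp 𝒯 n))

lemma not_mem_of_restSentence_mem {T : CTheory L} {n : ℕ} (hT : restSentence sp 𝒯 n ∈ T.1)
    {k : ℕ} (hk : k < n) : sp (nbhd 𝒯 (restSentence sp 𝒯 k)) ∉ T.1 := by
  induction n with
  | zero => exact absurd hk (Nat.not_lt_zero k)
  | succ n ih =>
    rw [restSentence, CTheory.inf_mem_iff, CTheory.not_mem_iff] at hT
    rcases Nat.lt_succ_iff_lt_or_eq.1 hk with hk | rfl
    exacts [ih hT.1 hk, hT.2]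

lemma inconsistent_pieceSentence {m n : ℕ} (hmn : m ≠ n) :
    Inconsistent (pieceSentence sp 𝒯 m) (pieceSentence sp 𝒯 n) := by
  suffices ∀ {m n}, m < n → ∀ T : CTheory L,
      pieceSentence sp 𝒯 m ∈ T.1 → pieceSentence sp 𝒯 n ∈ T.1 → False by
    refine inconsistent_iff.2 fun T hm hn => ?_
    rcases hmn.lt_or_gt with h | h
    exacts [this h T hm hn, this h T hn hm]
  intro m n hmn T hm hn
  rw [pieceSentence, CTheory.inf_mem_iff] at hm hn
  exact not_mem_of_restSentence_mem hn.1 hmn hm.2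

lemma prop_nbhd_restSentence (hsp : IsSplitting P sp) (h𝒯 : P 𝒯) (n : ℕ) :
    P (nbhd 𝒯 (restSentence sp 𝒯 n)) := by
  induction n with
  | zero => rwa [restSentence, nbhd_top]
  | succ n ih => rw [restSentence, nbhd_inf]; exact (hsp _ ih).2

lemma prop_nbhd_pieceSentence (hsp : IsSplitting P sp) (h𝒯 : P 𝒯) (n : ℕ) :
    P (nbhd 𝒯 (pieceSentence sp 𝒯 n)) := by
  rw [pieceSentence, nbhd_inf]
  exact (hsp _ (prop_nbhd_restSentence hsp h𝒯 n)).1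

lemma RSinf_of_split (hinf : ∀ 𝒮, P 𝒮 → 𝒮.Infinite)
    (hsplit : ∀ 𝒮, P 𝒮 → ∃ ρ : L.Sentence, P (nbhd 𝒮 ρ) ∧ P (nbhd 𝒮 ρ.not)) (h𝒯 : P 𝒯) :
    RSinf.{_, _, w} 𝒯 := by
  choose! sp hsp using hsplit
  intro α
  induction α using Ordinal.limitRecOn generalizing 𝒯 with
  | zero => exact RSge_zero.2 (hinf 𝒯 h𝒯).nonempty
  | add_one β ih =>
    rcases eq_or_ne β 0 with rfl | hβ
    · rw [zero_add]; exact RSge_one.2 (hinf 𝒯 h𝒯)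
    · exact (RSge_add_one_of_ne_zero hβ).2 ⟨pieceSentence sp 𝒯,
        fun m n => inconsistent_pieceSentence, fun k => ih (prop_nbhd_pieceSentence hsp h𝒯 k)⟩
  | limit β hβ ih => exact (RSge_of_isSuccLimit hβ).2 fun γ hγ => ih γ hγ h𝒯

def signedSentence (b : Bool) (φ : L.Sentence) : L.Sentence :=
  cond b φ φ.not

lemma signedSentence_not_mem {b c : Bool} (hbc : b ≠ c) {φ : L.Sentence} {T : CTheory L}
    (h : signedSentence b φ ∈ T.1) : signedSentence c φ ∉ T.1 := by
  cases b <;> cases c <;> simp_all [signedSentence, CTheory.not_mem_iff]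

def splitTree (sp : Set (CTheory L) → L.Sentence) (𝒯 : Set (CTheory L)) (x : ℕ → Bool) :
    ℕ → Set (CTheory L)
  | 0 => 𝒯
  | n + 1 => nbhd (splitTree sp 𝒯 x n) (signedSentence (x n) (sp (splitTree sp 𝒯 x n)))

lemma splitTree_congr {x y : ℕ → Bool} {n : ℕ} (h : ∀ k < n, x k = y k) :
    splitTree sp 𝒯 x n = splitTree sp 𝒯 y n := by
  induction n with
  | zero => rfl
  | succ n ih =>
    rw [splitTree, splitTree, ih fun k hk => h k (Nat.lt_succ_of_lt hk), h n (Nat.lt_succ_self n)]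

lemma splitTree_subset (x : ℕ → Bool) (n : ℕ) :
    splitTree sp 𝒯 x n ⊆
      {T | T ∈ 𝒯 ∧ ∀ k < n, signedSentence (x k) (sp (splitTree sp 𝒯 x k)) ∈ T.1} := by
  induction n with
  | zero => exact fun T hT => ⟨hT, fun k hk => absurd hk (Nat.not_lt_zero k)⟩
  | succ n ih =>
    rintro T ⟨hTn, hsn⟩
    refine ⟨(ih hTn).1, fun k hk => ?_⟩
    rcases Nat.lt_succ_iff_lt_or_eq.1 hk with hk | rfl
    exacts [(ih hTn).2 k hk, hsn]

lemma prop_splitTree (hsp : IsSplitting P sp) (h𝒯 : P 𝒯) (x : ℕ → Bool) (n : ℕ) :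
    P (splitTree sp 𝒯 x n) := by
  induction n with
  | zero => exact h𝒯
  | succ n ih =>
    rw [splitTree]
    cases x n
    exacts [(hsp _ ih).2, (hsp _ ih).1]

lemma exists_isAccPoint_branch (hinf : ∀ 𝒮, P 𝒮 → 𝒮.Infinite) (hsp : IsSplitting P sp)
    (h𝒯 : P 𝒯)
    (x : ℕ → Bool) : ∃ T : CTheory L, IsAccPoint 𝒯 T ∧
      ∀ k, signedSentence (x k) (sp (splitTree sp 𝒯 x k)) ∈ T.1 := by
  classical
  obtain ⟨T, hacc, hT⟩ := exists_isAccPoint_superset (𝒯 := 𝒯)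
    (Φ := Set.range fun k => signedSentence (x k) (sp (splitTree sp 𝒯 x k))) fun Φ₀ hΦ₀ => by
      obtain ⟨t, -, rfl⟩ := Finset.subset_set_image_iff.1 (Set.image_univ ▸ hΦ₀)
      obtain ⟨n, hn⟩ := t.exists_nat_subset_range
      refine (hinf _ (prop_splitTree hsp h𝒯 x n)).mono fun T hT => ?_
      refine ⟨(splitTree_subset x n hT).1, fun ψ hψ => ?_⟩
      obtain ⟨k, hk, rfl⟩ := Finset.mem_image.1 hψ
      exact (splitTree_subset x n hT).2 k (Finset.mem_range.1 (hn hk))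
  exact ⟨T, hacc, fun k => hT ⟨k, rfl⟩⟩

lemma continuum_le_eSp_of_split (hinf : ∀ 𝒮, P 𝒮 → 𝒮.Infinite)
    (hsplit : ∀ 𝒮, P 𝒮 → ∃ ρ : L.Sentence, P (nbhd 𝒮 ρ) ∧ P (nbhd 𝒮 ρ.not)) (h𝒯 : P 𝒯) :
    (2 : Cardinal) ^ ℵ₀ ≤ eSp 𝒯 := by
  choose! sp hsp using hsplit
  choose T hacc hT using exists_isAccPoint_branch hinf hsp h𝒯
  have hinj : Function.Injective fun x => (⟨T x, hacc x⟩ : {T : CTheory L // IsAccPoint 𝒯 T}) := by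
    intro x y hxy
    replace hxy : T x = T y := congrArg Subtype.val hxy
    by_contra hne
    have hex : ∃ n, x n ≠ y n := Function.ne_iff.1 hne
    have hprefix : splitTree sp 𝒯 x (Nat.find hex) = splitTree sp 𝒯 y (Nat.find hex) :=
      splitTree_congr fun k hk => not_not.1 (Nat.find_min hex hk)
    have hy := hT y (Nat.find hex)
    rw [← hprefix, ← hxy] at hy
    exact signedSentence_not_mem (Nat.find_spec hex) (hT x (Nat.find hex)) hy
  simpa [eSp] using Cardinal.lift_mk_le_lift_mk_of_injective hinj

end Splitting

lemma RSinf.exists_split [Countable L.Sentence] {𝒯 : Set (CTheory L)} (h : RSinf.{_, _, w} 𝒯) :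
    ∃ ρ : L.Sentence, RSinf.{_, _, w} (nbhd 𝒯 ρ) ∧ RSinf.{_, _, w} (nbhd 𝒯 ρ.not) := by
  by_contra! hc
  have hbound : ∀ ρ : L.Sentence, ∃ α : Ordinal.{w},
      ¬ (RSge α (nbhd 𝒯 ρ) ∧ RSge α (nbhd 𝒯 ρ.not)) := by
    intro ρ
    by_contra! hρ
    exact hc ρ (fun α => (hρ α).1) fun α => (hρ α).2
  choose g hg using hbound
  -- countably many bounds have a common bound `δ`, but `RS(𝒯) ≥ δ + 1` yields a sentence
  -- `φ₀` both of whose sides have rank at least `δ`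
  set δ : Ordinal.{w} := (⨆ ρ, g ρ) + 1
  obtain ⟨φ, hincons, hrank⟩ :=
    (RSge_add_one_of_ne_zero (add_pos_of_right one_pos _).ne').1 (h (δ + 1))
  have hsub : nbhd 𝒯 (φ 1) ⊆ nbhd 𝒯 (φ 0).not := fun T hT => ⟨hT.1,
    (CTheory.not_mem_iff T _).2 fun h0 => inconsistent_iff.1 (hincons 0 1 zero_ne_one) T h0 hT.2⟩
  have hle : g (φ 0) ≤ δ := (Ordinal.le_iSup g (φ 0)).trans le_self_add
  exact hg (φ 0) ⟨RSge_anti hle (hrank 0), RSge_anti hle (RSge_mono δ hsub (hrank 1))⟩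

/-- Condensation argument: the theories with a countable neighbourhood in `X` form a countable
set, and two distinct theories all of whose neighbourhoods in `X` are uncountable are separated
by a sentence. -/
lemma exists_split_of_not_countable [Countable L.Sentence] {X : Set (CTheory L)}
    (hX : ¬ X.Countable) :
    ∃ ρ : L.Sentence, ¬ (X ∩ {T | ρ ∈ T.1}).Countable ∧ ¬ (X ∩ {T | ρ.not ∈ T.1}).Countable := by
  by_contra! hc
  set C := ⋃ (φ : L.Sentence) (_ : (X ∩ {T | φ ∈ T.1}).Countable), X ∩ {T | φ ∈ T.1}
  have hC : C.Countable := Set.countable_iUnion fun φ => Set.countable_iUnion fun h => h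
  have hrest : (X \ C).Subsingleton := by
    have hcond : ∀ T ∈ X \ C, ∀ ψ ∈ T.1, ¬ (X ∩ {T | ψ ∈ T.1}).Countable :=
      fun T hT ψ hψ hcount => hT.2 (Set.mem_iUnion₂.2 ⟨ψ, hcount, hT.1, hψ⟩)
    intro T hT T' hT'
    by_contra hne
    obtain ⟨φ, hφ⟩ := Set.not_subset.1 fun hsub => hne (CTheory.eq_of_subset hsub)
    exact hcond T' hT' _ ((CTheory.not_mem_iff T' φ).2 hφ.2) (hc φ (hcond T hT φ hφ.1))
  exact hX ((hC.union hrest.countable).mono fun T hT => by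
    by_cases hTC : T ∈ C
    exacts [Or.inl hTC, Or.inr ⟨hT, hTC⟩])

section ClE

variable {𝒯 : Set (CTheory L)}

lemma ClE_inter_subset_ClE_nbhd (φ : L.Sentence) :
    ClE 𝒯 ∩ {T | φ ∈ T.1} ⊆ ClE (nbhd 𝒯 φ) := by
  rintro T ⟨hT | hacc, hφ⟩
  · exact Or.inl ⟨hT, hφ⟩
  · refine Or.inr fun ψ hψ => ?_
    rw [← nbhd_inf]
    exact hacc _ ((CTheory.inf_mem_iff T φ ψ).2 ⟨hφ, hψ⟩)

lemma infinite_of_not_countable_ClE (h : ¬ (ClE 𝒯).Countable) : 𝒯.Infinite := by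
  refine fun hfin => h (hfin.countable.union (Set.countable_empty.mono fun T hacc => ?_))
  exact (hacc ⊤ T.top_mem) (by rwa [nbhd_top])

lemma exists_split_of_not_countable_ClE [Countable L.Sentence] (h : ¬ (ClE 𝒯).Countable) :
    ∃ ρ : L.Sentence, ¬ (ClE (nbhd 𝒯 ρ)).Countable ∧ ¬ (ClE (nbhd 𝒯 ρ.not)).Countable := by
  obtain ⟨ρ, h₁, h₂⟩ := exists_split_of_not_countable h
  exact ⟨ρ, fun hc => h₁ (hc.mono (ClE_inter_subset_ClE_nbhd ρ)),
    fun hc => h₂ (hc.mono (ClE_inter_subset_ClE_nbhd ρ.not))⟩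

end ClE

lemma mk_CTheory_le (hL : Cardinal.mk L.Sentence ≤ ℵ₀) : Cardinal.mk (CTheory L) ≤ 2 ^ ℵ₀ :=
  calc Cardinal.mk (CTheory L) ≤ Cardinal.mk L.Theory := Cardinal.mk_subtype_le _
    _ = 2 ^ Cardinal.mk L.Sentence := Cardinal.mk_set
    _ ≤ 2 ^ ℵ₀ := Cardinal.power_le_power_left two_ne_zero hL

/-- Theorem 4.5: if the language has at most countably many sentences, then
the following are equivalent: (1) `|Cl_E(𝒯)| = 2^ℵ₀`; (2) `e`-Sp(𝒯) = 2^ℵ₀;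
(3) `RS(𝒯) = ∞`. -/
theorem continuum_clE_tfae (𝒯 : Set (CTheory L))
    (hL : Cardinal.mk L.Sentence ≤ Cardinal.aleph0) :
    List.TFAE
      [Cardinal.mk ↥(ClE 𝒯) = (2 : Cardinal) ^ Cardinal.aleph0,
       eSp 𝒯 = (2 : Cardinal) ^ Cardinal.aleph0,
       (∀ α : Ordinal.{w}, RSge α 𝒯)] := by
  have : Countable L.Sentence := Cardinal.mk_le_aleph0_iff.1 hL
  tfae_have 3 → 2 := fun h => le_antisymm ((Cardinal.mk_subtype_le _).trans (mk_CTheory_le hL))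
    (continuum_le_eSp_of_split (fun _ => RSinf.infinite) (fun _ => RSinf.exists_split) h)
  tfae_have 2 → 1 := fun h => le_antisymm ((Cardinal.mk_set_le _).trans (mk_CTheory_le hL))
    (h ▸ Cardinal.mk_le_mk_of_subset Set.subset_union_right)
  tfae_have 1 → 3 := fun h => RSinf_of_split (fun _ => infinite_of_not_countable_ClE)
    (fun _ => exists_split_of_not_countable_ClE) fun hc =>
      (Cardinal.cantor ℵ₀).not_ge (h ▸ Cardinal.le_aleph0_iff_set_countable.2 hc)
  tfae_finish
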